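/- arXiv:math/0109008 — 2 statements merged into one kernel-verified Lean document; each statement's English description precedes it below -/
import Mathlib

section
/- Let T and F be nonnegative n×n matrices with ρ(T) < 1, F ≠ 0, and T + F irreducible. Set Q = F(I−T)^{-1} and R₀ = ρ(Q). Then R₀ > 0 and ρ(T + F/R₀) = 1. -/
open Matrix Filter Topology

noncomputable def specRad {n : ℕ} (A : Matrix (Fin n) (Fin n) ℝ) : ℝ :=
  (spectralRadius ℂ (A.map Complex.ofReal)).toReal

def MatIrred {n : ℕ} (A : Matrix (Fin n) (Fin n) ℝ) : Prop :=
  ∀ i j, ∃ k : ℕ, 0 < k ∧ 0 < (A ^ k) i j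

def MatPrimitive {n : ℕ} (A : Matrix (Fin n) (Fin n) ℝ) : Prop :=
  ∃ k : ℕ, 0 < k ∧ ∀ i j, 0 < (A ^ k) i j

/-
For nonnegative `T` with `ρ(T) < 1` and nonnegative `B`, write `Q = B (1 - T)⁻¹`. The factorisation
`1 - (T + B) = (1 - Q) (1 - T)` and the identity `(1 - Q) (1 + B (1 - T - B)⁻¹) = 1` exhibit
nonnegative inverses, and a nonnegative `A` for which `1 - A` has a nonnegative inverse has bounded
powers, hence `ρ(A) ≤ 1`. So `ρ(Q) < 1` forces `ρ(T + B) ≤ 1` and `ρ(T + B) < 1` forces `ρ(Q) ≤ 1`;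
rescaling `B` sharpens these to `ρ(Q) ≤ 1 → ρ(T + B) ≤ 1` and `ρ(T + B) < 1 → ρ(Q) < 1`. For
`B = F / R₀` we have `ρ(Q) = 1`, whence `ρ(T + F / R₀) = 1`. Finally `R₀ > 0`: irreducibility puts
`F` on a cycle of `T + F`, so `ρ(T + s F) > 1` for large `s`, while `R₀ = 0` would give
`ρ(T + s F) ≤ 1` for all `s`. Throughout, spectral radii are computed by Gelfand's formula
`ρ(A) = lim ‖A ^ k‖ ^ (1 / k)`, which makes `ρ` monotone on nonnegative matrices.
-/

attribute [local instance] Matrix.linftyOpNormedRing Matrix.linftyOpNormedAlgebra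

namespace Matrix

section Entrywise

variable {ι α : Type*} [Fintype ι] [Semiring α] [PartialOrder α] [IsOrderedRing α]
  {A B C D : Matrix ι ι α}

lemma mul_apply_nonneg (hA : ∀ i j, 0 ≤ A i j) (hB : ∀ i j, 0 ≤ B i j) (i j : ι) :
    0 ≤ (A * B) i j :=
  Finset.sum_nonneg fun l _ => mul_nonneg (hA i l) (hB l j)

lemma mul_apply_le_mul_apply (hA : ∀ i j, 0 ≤ A i j) (hC : ∀ i j, 0 ≤ C i j)
    (hAB : ∀ i j, A i j ≤ B i j) (hCD : ∀ i j, C i j ≤ D i j) (i j : ι) :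
    (A * C) i j ≤ (B * D) i j :=
  Finset.sum_le_sum fun l _ =>
    mul_le_mul (hAB i l) (hCD l j) (hC l j) ((hA i l).trans (hAB i l))

lemma pow_apply_le_pow_apply [DecidableEq ι] (hA : ∀ i j, 0 ≤ A i j)
    (hAB : ∀ i j, A i j ≤ B i j) (k : ℕ) :
    ∀ i j, (A ^ k) i j ≤ (B ^ k) i j := by
  induction k with
  | zero => exact fun _ _ => le_rfl
  | succ k ih =>
    simp only [pow_succ]
    exact mul_apply_le_mul_apply (pow_apply_nonneg hA k) hA ih hAB

lemma apply_self_pow_le_pow_apply_self [DecidableEq ι] (hA : ∀ i j, 0 ≤ A i j) (i : ι) (k : ℕ) :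
    A i i ^ k ≤ (A ^ k) i i := by
  induction k with
  | zero => simp
  | succ k ih =>
    rw [pow_succ, pow_succ, mul_apply]
    calc A i i ^ k * A i i ≤ (A ^ k) i i * A i i := by gcongr; exact hA i i
      _ ≤ ∑ l, (A ^ k) i l * A l i :=
        Finset.single_le_sum (f := fun l => (A ^ k) i l * A l i)
          (fun l _ => mul_nonneg (pow_apply_nonneg hA k i l) (hA l i)) (Finset.mem_univ i)

end Entrywise

section LinftyOpNorm

attribute [local instance] Matrix.linftyOpSeminormedAddCommGroup

variable {m n α : Type*} [Fintype m] [Fintype n] [SeminormedAddCommGroup α]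

lemma norm_apply_le_linfty_opNorm (A : Matrix m n α) (i : m) (j : n) : ‖A i j‖ ≤ ‖A‖ := by
  rw [linfty_opNorm_def, ← coe_nnnorm, NNReal.coe_le_coe]
  exact (Finset.single_le_sum (fun _ _ => zero_le) (Finset.mem_univ j)).trans
    (Finset.le_sup (f := fun i => ∑ j, ‖A i j‖₊) (Finset.mem_univ i))

lemma linfty_opNorm_le_of_norm_apply_le {A B : Matrix m n α} (h : ∀ i j, ‖A i j‖ ≤ ‖B i j‖) :
    ‖A‖ ≤ ‖B‖ := by
  rw [linfty_opNorm_def, linfty_opNorm_def, NNReal.coe_le_coe]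
  exact Finset.sup_mono_fun fun i _ => Finset.sum_le_sum fun j _ => h i j

end LinftyOpNorm

end Matrix

section SpecRad

variable {n : ℕ} {A B T : Matrix (Fin n) (Fin n) ℝ}

lemma specRad_nonneg (A : Matrix (Fin n) (Fin n) ℝ) : 0 ≤ specRad A := ENNReal.toReal_nonneg

lemma tendsto_norm_pow_rpow_inv_specRad (A : Matrix (Fin n) (Fin n) ℝ) :
    Tendsto (fun k : ℕ => ‖A ^ k‖ ^ (k : ℝ)⁻¹) atTop (𝓝 (specRad A)) := by
  set Ac := A.map Complex.ofReal
  have hpow (k : ℕ) : Ac ^ k = (A ^ k).map Complex.ofReal :=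
    (map_pow Complex.ofRealHom.mapMatrix A k).symm
  have hfin : spectralRadius ℂ Ac ≠ ⊤ :=
    ((spectrum.spectralRadius_le_pow_nnnorm_pow_one_div ℂ Ac 0).trans_lt (by finiteness)).ne
  refine ((ENNReal.tendsto_toReal hfin).comp
    (spectrum.pow_nnnorm_pow_one_div_tendsto_nhds_spectralRadius Ac)).congr fun k => ?_
  simp [← ENNReal.toReal_rpow, hpow, linfty_opNorm_def]

lemma specRad_mono (hA : ∀ i j, 0 ≤ A i j) (hAB : ∀ i j, A i j ≤ B i j) :
    specRad A ≤ specRad B := by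
  refine le_of_tendsto_of_tendsto' (tendsto_norm_pow_rpow_inv_specRad A)
    (tendsto_norm_pow_rpow_inv_specRad B) fun k => ?_
  gcongr
  refine linfty_opNorm_le_of_norm_apply_le fun i j => ?_
  have hAk := pow_apply_nonneg hA k i j
  have hABk := pow_apply_le_pow_apply hA hAB k i j
  rw [Real.norm_of_nonneg hAk, Real.norm_of_nonneg (hAk.trans hABk)]
  exact hABk

lemma specRad_smul (A : Matrix (Fin n) (Fin n) ℝ) {c : ℝ} (hc : 0 ≤ c) :
    specRad (c • A) = c * specRad A := by
  refine tendsto_nhds_unique ((tendsto_norm_pow_rpow_inv_specRad (c • A)).congr' ?_)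
    ((tendsto_norm_pow_rpow_inv_specRad A).const_mul c)
  filter_upwards [eventually_ne_atTop 0] with k hk
  rw [smul_pow, norm_smul, Real.norm_of_nonneg (pow_nonneg hc k),
    Real.mul_rpow (pow_nonneg hc k) (norm_nonneg _), Real.pow_rpow_inv_natCast hc hk]

lemma specRad_pow (A : Matrix (Fin n) (Fin n) ℝ) {k : ℕ} (hk : k ≠ 0) :
    specRad (A ^ k) = specRad A ^ k := by
  have hsub : Tendsto (fun m : ℕ => k * m) atTop atTop :=
    tendsto_id.const_mul_atTop' (Nat.pos_of_ne_zero hk)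
  refine tendsto_nhds_unique (tendsto_norm_pow_rpow_inv_specRad (A ^ k))
    ((((tendsto_norm_pow_rpow_inv_specRad A).comp hsub).pow k).congr fun m => ?_)
  rw [Function.comp_apply, ← pow_mul, ← Real.rpow_natCast, ← Real.rpow_mul (norm_nonneg _)]
  congr 1
  push_cast
  field_simp

lemma apply_self_le_specRad (hA : ∀ i j, 0 ≤ A i j) (i : Fin n) : A i i ≤ specRad A := by
  refine ge_of_tendsto (tendsto_norm_pow_rpow_inv_specRad A) ?_
  filter_upwards [eventually_ne_atTop 0] with k hk
  calc A i i = (A i i ^ k) ^ (k : ℝ)⁻¹ := (Real.pow_rpow_inv_natCast (hA i i) hk).symm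
    _ ≤ ‖A ^ k‖ ^ (k : ℝ)⁻¹ := by
      gcongr
      · exact pow_nonneg (hA i i) k
      · exact (apply_self_pow_le_pow_apply_self hA i k).trans
          ((Real.le_norm_self _).trans (norm_apply_le_linfty_opNorm _ i i))

lemma specRad_le_one_of_pow_apply_le (hA : ∀ i j, 0 ≤ A i j) (C : Matrix (Fin n) (Fin n) ℝ)
    (hC : ∀ k i j, (A ^ k) i j ≤ C i j) : specRad A ≤ 1 := by
  set D := max ‖C‖ 1
  have hD : 0 < D := lt_max_of_lt_right one_pos
  have hlim : Tendsto (fun k : ℕ => D ^ (k : ℝ)⁻¹) atTop (𝓝 1) := by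
    simpa [Function.comp_def] using ((Real.continuousAt_const_rpow hD.ne').tendsto.comp
      tendsto_inv_atTop_zero).comp tendsto_natCast_atTop_atTop
  refine le_of_tendsto_of_tendsto' (tendsto_norm_pow_rpow_inv_specRad A) hlim fun k => ?_
  gcongr
  refine (linfty_opNorm_le_of_norm_apply_le fun i j => ?_).trans (le_max_left _ _)
  have hAk := pow_apply_nonneg hA k i j
  rw [Real.norm_of_nonneg hAk, Real.norm_of_nonneg (hAk.trans (hC k i j))]
  exact hC k i j

lemma summable_pow_of_specRad_lt_one (h : specRad A < 1) : Summable (A ^ ·) := by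
  obtain ⟨r, hAr, hr1⟩ := exists_between h
  refine Summable.of_norm_bounded_eventually_nat
    (summable_geometric_of_lt_one ((specRad_nonneg A).trans hAr.le) hr1) ?_
  filter_upwards [(tendsto_norm_pow_rpow_inv_specRad A).eventually_lt_const hAr,
    eventually_ne_atTop 0] with k hk hk0
  calc ‖A ^ k‖ = (‖A ^ k‖ ^ (k : ℝ)⁻¹) ^ k := (Real.rpow_inv_natCast_pow (norm_nonneg _) hk0).symm
    _ ≤ r ^ k := by gcongr

lemma inv_one_sub_eq_tsum_pow (h : specRad A < 1) : (1 - A)⁻¹ = ∑' k, A ^ k :=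
  inv_eq_right_inv (summable_pow_of_specRad_lt_one h).one_sub_mul_tsum_pow

lemma one_sub_mul_inv_one_sub (h : specRad A < 1) : (1 - A) * (1 - A)⁻¹ = 1 := by
  rw [inv_one_sub_eq_tsum_pow h]
  exact (summable_pow_of_specRad_lt_one h).one_sub_mul_tsum_pow

lemma inv_one_sub_mul_one_sub (h : specRad A < 1) : (1 - A)⁻¹ * (1 - A) = 1 :=
  mul_eq_one_comm.mp (one_sub_mul_inv_one_sub h)

lemma inv_one_sub_apply_nonneg (hA : ∀ i j, 0 ≤ A i j) (h : specRad A < 1) (i j : Fin n) :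
    0 ≤ (1 - A)⁻¹ i j := by
  rw [inv_one_sub_eq_tsum_pow h]
  have hsum := (summable_pow_of_specRad_lt_one h).hasSum
  exact HasSum.nonneg (fun k => pow_apply_nonneg hA k i j) (Pi.hasSum.mp (Pi.hasSum.mp hsum i) j)

/-- Partial sums of the powers of `A` are `C (1 - A ^ K) ≤ C`, so the powers stay bounded. -/
lemma specRad_le_one_of_one_sub_mul_eq_one {C : Matrix (Fin n) (Fin n) ℝ}
    (hA : ∀ i j, 0 ≤ A i j) (hC : ∀ i j, 0 ≤ C i j) (hAC : (1 - A) * C = 1) :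
    specRad A ≤ 1 := by
  refine specRad_le_one_of_pow_apply_le hA C fun k i j => ?_
  have hpartial : ∑ m ∈ Finset.range (k + 1), A ^ m = C - C * A ^ (k + 1) := by
    rw [← mul_one_sub, ← mul_neg_geom_sum, ← mul_assoc, mul_eq_one_comm.mp hAC, one_mul]
  have hle : (A ^ k) i j ≤ (∑ m ∈ Finset.range (k + 1), A ^ m) i j := by
    rw [Matrix.sum_apply]
    exact Finset.single_le_sum (f := fun m => (A ^ m) i j)
      (fun m _ => pow_apply_nonneg hA m i j) (Finset.self_mem_range_succ k)
  have htail := mul_apply_nonneg hC (pow_apply_nonneg hA (k + 1)) i j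
  rw [hpartial, Matrix.sub_apply] at hle
  linarith

lemma specRad_add_le_one_of_specRad_mul_inv_lt_one (hT : ∀ i j, 0 ≤ T i j)
    (hB : ∀ i j, 0 ≤ B i j) (hρT : specRad T < 1) (hQ : specRad (B * (1 - T)⁻¹) < 1) :
    specRad (T + B) ≤ 1 := by
  set Q := B * (1 - T)⁻¹
  have hQ0 : ∀ i j, 0 ≤ Q i j := mul_apply_nonneg hB (inv_one_sub_apply_nonneg hT hρT)
  have hfactor : 1 - (T + B) = (1 - Q) * (1 - T) := by
    rw [sub_mul, one_mul, mul_assoc, inv_one_sub_mul_one_sub hρT, mul_one]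
    abel
  refine specRad_le_one_of_one_sub_mul_eq_one (fun i j => add_nonneg (hT i j) (hB i j))
    (mul_apply_nonneg (inv_one_sub_apply_nonneg hT hρT) (inv_one_sub_apply_nonneg hQ0 hQ)) ?_
  rw [hfactor, mul_assoc, ← mul_assoc (1 - T), one_sub_mul_inv_one_sub hρT, one_mul,
    one_sub_mul_inv_one_sub hQ]

lemma specRad_mul_inv_le_one_of_specRad_add_lt_one (hT : ∀ i j, 0 ≤ T i j)
    (hB : ∀ i j, 0 ≤ B i j) (hρT : specRad T < 1) (hTB : specRad (T + B) < 1) :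
    specRad (B * (1 - T)⁻¹) ≤ 1 := by
  have hTB0 : ∀ i j, 0 ≤ (T + B) i j := fun i j => add_nonneg (hT i j) (hB i j)
  set D := (1 - (T + B))⁻¹
  have hZ : (1 - T) * D = 1 + B * D := by
    calc (1 - T) * D = (1 - (T + B)) * D + B * D := by
          rw [← add_mul, sub_add_eq_sub_sub, sub_add_cancel]
      _ = 1 + B * D := by rw [one_sub_mul_inv_one_sub hTB]
  refine specRad_le_one_of_one_sub_mul_eq_one (C := 1 + B * D)
    (mul_apply_nonneg hB (inv_one_sub_apply_nonneg hT hρT))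
    (fun i j => add_nonneg (by rw [one_apply]; split_ifs <;> norm_num)
      (mul_apply_nonneg hB (inv_one_sub_apply_nonneg hTB0 hTB) i j)) ?_
  rw [← hZ, ← mul_assoc, sub_mul, one_mul, mul_assoc, inv_one_sub_mul_one_sub hρT, mul_one,
    sub_sub, one_sub_mul_inv_one_sub hTB]

lemma specRad_add_le_one_of_specRad_mul_inv_le_one (hT : ∀ i j, 0 ≤ T i j)
    (hB : ∀ i j, 0 ≤ B i j) (hρT : specRad T < 1) (hQ : specRad (B * (1 - T)⁻¹) ≤ 1) :
    specRad (T + B) ≤ 1 := by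
  have hlim : Tendsto (fun t : ℝ => t * specRad (T + B)) (𝓝[<] 1) (𝓝 (specRad (T + B))) := by
    simpa using ((continuous_mul_const _).tendsto (1 : ℝ)).mono_left nhdsWithin_le_nhds
  refine le_of_tendsto hlim ?_
  filter_upwards [Ioo_mem_nhdsLT one_pos] with t ⟨ht0, ht1⟩
  have htB : ∀ i j, 0 ≤ (t • B) i j := fun i j => mul_nonneg ht0.le (hB i j)
  calc t * specRad (T + B) = specRad (t • (T + B)) := (specRad_smul _ ht0.le).symm
    _ ≤ specRad (T + t • B) := by
      refine specRad_mono (fun i j => mul_nonneg ht0.le (add_nonneg (hT i j) (hB i j)))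
        fun i j => ?_
      simp only [Matrix.smul_apply, Matrix.add_apply, smul_eq_mul]
      nlinarith [hT i j]
    _ ≤ 1 := by
      refine specRad_add_le_one_of_specRad_mul_inv_lt_one hT htB hρT ?_
      rw [smul_mul, specRad_smul _ ht0.le]
      nlinarith

lemma specRad_mul_inv_lt_one_of_specRad_add_lt_one (hT : ∀ i j, 0 ≤ T i j)
    (hB : ∀ i j, 0 ≤ B i j) (hρT : specRad T < 1) (hTB : specRad (T + B) < 1) :
    specRad (B * (1 - T)⁻¹) < 1 := by
  obtain ⟨v, hTBv, hv1⟩ := exists_between hTB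
  have hv0 : 0 < v := (specRad_nonneg _).trans_lt hTBv
  have hv_inv : 1 ≤ v⁻¹ := (one_lt_inv₀ hv0).mpr hv1 |>.le
  have huB : ∀ i j, 0 ≤ (v⁻¹ • B) i j := fun i j => mul_nonneg (by positivity) (hB i j)
  have hlt : specRad (T + v⁻¹ • B) < 1 := by
    calc specRad (T + v⁻¹ • B) ≤ specRad (v⁻¹ • (T + B)) := by
          refine specRad_mono (fun i j => add_nonneg (hT i j) (huB i j)) fun i j => ?_
          simp only [Matrix.smul_apply, Matrix.add_apply, smul_eq_mul]
          nlinarith [hT i j]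
      _ = v⁻¹ * specRad (T + B) := specRad_smul _ (by positivity)
      _ < v⁻¹ * v := by gcongr
      _ = 1 := inv_mul_cancel₀ hv0.ne'
  have hle := specRad_mul_inv_le_one_of_specRad_add_lt_one hT huB hρT hlt
  rw [smul_mul, specRad_smul _ (by positivity), inv_mul_le_iff₀ hv0, mul_one] at hle
  exact hle.trans_lt hv1

/-- Irreducibility puts an edge `i → j` of `F` on a cycle `i → j ⇝ i` of `T + F`, so
`(T + s F) ^ (k + 1) ≥ s F (T + F) ^ k` has spectral radius growing linearly in `s`. -/
lemma exists_one_lt_specRad_add_smul {F : Matrix (Fin n) (Fin n) ℝ} (hT : ∀ i j, 0 ≤ T i j)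
    (hF : ∀ i j, 0 ≤ F i j) (hF0 : F ≠ 0) (hirr : MatIrred (T + F)) :
    ∃ s : ℝ, 0 < s ∧ 1 < specRad (T + s • F) := by
  obtain ⟨i, j, hij⟩ : ∃ i j, 0 < F i j := by
    by_contra! h
    exact hF0 (Matrix.ext fun i j => le_antisymm (h i j) (hF i j))
  obtain ⟨k, -, hk⟩ := hirr j i
  have hTF : ∀ i j, 0 ≤ (T + F) i j := fun i j => add_nonneg (hT i j) (hF i j)
  set P := F * (T + F) ^ k
  have hP : 0 < specRad P := by
    refine lt_of_lt_of_le ?_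
      (apply_self_le_specRad (mul_apply_nonneg hF (pow_apply_nonneg hTF k)) i)
    exact (mul_pos hij hk).trans_le
      (Finset.single_le_sum (f := fun l => F i l * ((T + F) ^ k) l i)
        (fun l _ => mul_nonneg (hF i l) (pow_apply_nonneg hTF k l i)) (Finset.mem_univ j))
  set s := max 1 (2 / specRad P)
  have hs1 : 1 ≤ s := le_max_left _ _
  have hs0 : 0 < s := one_pos.trans_le hs1
  have hsF : ∀ i j, 0 ≤ (s • F) i j := fun i j => mul_nonneg hs0.le (hF i j)
  have hgrowth : ∀ a b, (s • P) a b ≤ ((T + s • F) ^ (k + 1)) a b := by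
    rw [pow_succ', ← smul_mul]
    refine mul_apply_le_mul_apply hsF (pow_apply_nonneg hTF k)
      (fun a b => le_add_of_nonneg_left (hT a b)) (pow_apply_le_pow_apply hTF (fun a b => ?_) k)
    simp only [Matrix.smul_apply, Matrix.add_apply, smul_eq_mul]
    nlinarith [hF a b]
  refine ⟨s, hs0, lt_of_pow_lt_pow_left₀ (k + 1) (specRad_nonneg _) ?_⟩
  calc (1 : ℝ) ^ (k + 1) < 2 := by norm_num
    _ ≤ s * specRad P := (div_le_iff₀ hP).mp (le_max_right _ _)
    _ = specRad (s • P) := (specRad_smul P hs0.le).symm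
    _ ≤ specRad ((T + s • F) ^ (k + 1)) :=
      specRad_mono
        (fun a b => mul_nonneg hs0.le (mul_apply_nonneg hF (pow_apply_nonneg hTF k) a b)) hgrowth
    _ = specRad (T + s • F) ^ (k + 1) := specRad_pow _ k.succ_ne_zero

end SpecRad

theorem net_reproductive_rate_pos_and_scaled_specRad_one {n : ℕ}
    (T F : Matrix (Fin n) (Fin n) ℝ)
    (hT : ∀ i j, 0 ≤ T i j) (hF : ∀ i j, 0 ≤ F i j)
    (hρ : specRad T < 1) (hF0 : F ≠ 0) (hirr : MatIrred (T + F)) :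
    0 < specRad (F * (1 - T)⁻¹) ∧
    specRad (T + (specRad (F * (1 - T)⁻¹))⁻¹ • F) = 1 := by
  set R₀ := specRad (F * (1 - T)⁻¹)
  have hR₀ : 0 < R₀ := by
    obtain ⟨s, hs, hlt⟩ := exists_one_lt_specRad_add_smul hT hF hF0 hirr
    by_contra! hR₀
    have hsF : ∀ i j, 0 ≤ (s • F) i j := fun i j => mul_nonneg hs.le (hF i j)
    refine (specRad_add_le_one_of_specRad_mul_inv_le_one hT hsF hρ ?_).not_gt hlt
    rw [smul_mul, specRad_smul _ hs.le]
    nlinarith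
  have hB : ∀ i j, 0 ≤ (R₀⁻¹ • F) i j := fun i j => mul_nonneg (inv_nonneg.2 hR₀.le) (hF i j)
  have hQ : specRad (R₀⁻¹ • F * (1 - T)⁻¹) = 1 := by
    rw [smul_mul, specRad_smul _ (inv_nonneg.2 hR₀.le), inv_mul_cancel₀ hR₀.ne']
  refine ⟨hR₀, le_antisymm (specRad_add_le_one_of_specRad_mul_inv_le_one hT hB hρ hQ.le) ?_⟩
  by_contra! hlt
  exact (specRad_mul_inv_lt_one_of_specRad_add_lt_one hT hB hρ hlt).ne hQ
end

section
/- Let P be a primitive nonnegative n×n matrix with spectral radius r = ρ(P), and let v, u be positive left and right eigenvectors of P for eigenvalue r, normalized so that vᵀu = 1. Then lim_{k→∞} (P/r)^k = u vᵀ. -/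
open Matrix Filter Topology

/-!
Normalising by `r` and conjugating by `diag u` turns `P` into a row-stochastic matrix `S`
with stationary distribution `π = v ∘ u`, some power `S ^ m` of which has all entries
`≥ δ > 0`. By Doeblin's argument, multiplying a vector by such a matrix shrinks its
oscillation `max - min` by the factor `1 - δ`, so `S ^ k x` becomes constant in the limit;
the constant is `π ⬝ x`, an average of the entries of `S ^ k x` since `π S ^ k = π`.
Hence `S ^ k → 1 πᵀ`, and undoing the conjugation gives `(P / r) ^ k → u vᵀ`.
-/

open Finset

section Oscillation

variable {ι : Type*} [Fintype ι] [Nonempty ι]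

noncomputable def osc (x : ι → ℝ) : ℝ :=
  univ.sup' univ_nonempty x - univ.inf' univ_nonempty x

theorem sub_le_osc (x : ι → ℝ) (i j : ι) : x i - x j ≤ osc x :=
  sub_le_sub (le_sup' x (mem_univ i)) (inf'_le x (mem_univ j))

theorem osc_nonneg (x : ι → ℝ) : 0 ≤ osc x := by
  obtain ⟨i⟩ := ‹Nonempty ι›
  simpa using sub_le_osc x i i

theorem osc_le_iff {x : ι → ℝ} {c : ℝ} : osc x ≤ c ↔ ∀ i j, x i - x j ≤ c := by
  refine ⟨fun h i j => (sub_le_osc x i j).trans h, fun h => ?_⟩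
  obtain ⟨i, -, hi⟩ := exists_mem_eq_sup' univ_nonempty x
  obtain ⟨j, -, hj⟩ := exists_mem_eq_inf' univ_nonempty x
  rw [osc, hi, hj]
  exact h i j

theorem abs_sub_dotProduct_le_osc {w : ι → ℝ} (hw : ∀ i, 0 ≤ w i) (hw1 : ∑ i, w i = 1)
    (x : ι → ℝ) (i : ι) : |x i - w ⬝ᵥ x| ≤ osc x := by
  have hsplit : x i - w ⬝ᵥ x = ∑ l, w l * (x i - x l) := by
    simp only [dotProduct, mul_sub, sum_sub_distrib, ← sum_mul, hw1, one_mul]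
  calc |x i - w ⬝ᵥ x| ≤ ∑ l, w l * |x i - x l| := by
        rw [hsplit]
        refine (abs_sum_le_sum_abs _ _).trans_eq (sum_congr rfl fun l _ => ?_)
        rw [abs_mul, abs_of_nonneg (hw l)]
    _ ≤ ∑ l, w l * osc x := by
        gcongr with l
        · exact hw l
        · exact abs_sub_le_iff.2 ⟨sub_le_osc x i l, sub_le_osc x l i⟩
    _ = osc x := by rw [← sum_mul, hw1, one_mul]

end Oscillation

theorem tendsto_zero_of_antitone_of_le_mul_shift {g : ℕ → ℝ} (hg : Antitone g)
    (hg0 : ∀ k, 0 ≤ g k) {m : ℕ} (hm : 0 < m) {θ : ℝ} (hθ0 : 0 ≤ θ) (hθ1 : θ < 1)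
    (hshift : ∀ k, g (m + k) ≤ θ * g k) :
    Tendsto g atTop (𝓝 0) := by
  have hgeom : ∀ q, g (m * q) ≤ θ ^ q * g 0 := by
    intro q
    induction q with
    | zero => simp
    | succ q ih =>
      calc g (m * (q + 1)) = g (m + m * q) := by ring_nf
        _ ≤ θ * (θ ^ q * g 0) := (hshift _).trans (mul_le_mul_of_nonneg_left ih hθ0)
        _ = θ ^ (q + 1) * g 0 := by ring
  have hmul : Tendsto (fun q => m * q) atTop atTop :=
    tendsto_atTop_mono (fun q => Nat.le_mul_of_pos_left q hm) tendsto_id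
  rw [tendsto_iff_tendsto_subseq_of_antitone hg hmul]
  refine squeeze_zero (fun q => hg0 _) hgeom ?_
  simpa using (tendsto_pow_atTop_nhds_zero_of_lt_one hθ0 hθ1).mul_const (g 0)

namespace Matrix

variable {ι : Type*} [Fintype ι] [DecidableEq ι]

theorem vecMul_pow_eq_self {S : Matrix ι ι ℝ} {π : ι → ℝ} (hπ : π ᵥ* S = π)
    (k : ℕ) : π ᵥ* S ^ k = π := by
  induction k with
  | zero => simp
  | succ k ih => rw [pow_succ, ← vecMul_vecMul, ih, hπ]

theorem diagonal_inv_mul_mul_diagonal_pow {u : ι → ℝ} (hu : ∀ i, u i ≠ 0)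
    (Q : Matrix ι ι ℝ) (k : ℕ) :
    (diagonal u⁻¹ * Q * diagonal u) ^ k = diagonal u⁻¹ * Q ^ k * diagonal u :=
  let D : (Matrix ι ι ℝ)ˣ :=
    ⟨diagonal u, diagonal u⁻¹, by simp [diagonal_mul_diagonal, hu],
      by simp [diagonal_mul_diagonal, hu]⟩
  D.conj_pow' Q k

theorem diagonal_inv_mul_mul_diagonal_mem_rowStochastic {Q : Matrix ι ι ℝ}
    (hQ : ∀ i j, 0 ≤ Q i j) {u : ι → ℝ} (hu : ∀ i, 0 < u i) (hQu : Q *ᵥ u = u) :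
    diagonal u⁻¹ * Q * diagonal u ∈ rowStochastic ℝ ι := by
  refine ⟨fun i j => ?_, ?_⟩
  · simp only [diagonal_mul, mul_diagonal, Pi.inv_apply]
    exact mul_nonneg (mul_nonneg (inv_pos.2 (hu i)).le (hQ i j)) (hu j).le
  · have hD1 : diagonal u *ᵥ 1 = u := by ext i; simp [mulVec_diagonal]
    ext i
    rw [← mulVec_mulVec, ← mulVec_mulVec, hD1, hQu, mulVec_diagonal, Pi.inv_apply,
      inv_mul_cancel₀ (hu i).ne', Pi.one_apply]

theorem vecMul_diagonal_inv_mul_mul_diagonal {Q : Matrix ι ι ℝ} {u v : ι → ℝ}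
    (hu : ∀ i, u i ≠ 0) (hvQ : v ᵥ* Q = v) :
    (v * u) ᵥ* (diagonal u⁻¹ * Q * diagonal u) = v * u := by
  have hvu : (v * u) ᵥ* diagonal u⁻¹ = v := by ext i; simp [vecMul_diagonal, hu]
  rw [← vecMul_vecMul, ← vecMul_vecMul, hvu, hvQ]
  ext i
  simp [vecMul_diagonal]

section Nonempty

variable [Nonempty ι]

theorem osc_mulVec_le {A : Matrix ι ι ℝ} (hA : A ∈ rowStochastic ℝ ι) {δ : ℝ}
    (hδ : ∀ i j, δ ≤ A i j) (x : ι → ℝ) : osc (A *ᵥ x) ≤ (1 - δ) * osc x := by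
  rw [osc_le_iff]
  intro i j
  -- `b` is the overlap of rows `i` and `j`: it cancels in the difference, and only the
  -- remaining mass `1 - ∑ b ≤ 1 - δ` sees the spread of `x`.
  set b : ι → ℝ := fun l => min (A i l) (A j l)
  have hsum : ∀ k, ∑ l, (A k l - b l) = 1 - ∑ l, b l := fun k => by
    rw [sum_sub_distrib, sum_row_of_mem_rowStochastic hA]
  have hδb : δ ≤ ∑ l, b l := by
    obtain ⟨l⟩ := ‹Nonempty ι›
    exact (le_min (hδ i l) (hδ j l)).trans
      (single_le_sum (fun k _ => le_min (hA.1 i k) (hA.1 j k)) (mem_univ l))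
  calc (A *ᵥ x) i - (A *ᵥ x) j
      = ∑ l, (A i l - b l) * x l - ∑ l, (A j l - b l) * x l := by
        simp only [mulVec, dotProduct, sub_mul, sum_sub_distrib]
        ring
    _ ≤ ∑ l, (A i l - b l) * univ.sup' univ_nonempty x
          - ∑ l, (A j l - b l) * univ.inf' univ_nonempty x := by
        gcongr with l _ l _
        · exact sub_nonneg.2 (min_le_left _ _)
        · exact le_sup' x (mem_univ l)
        · exact sub_nonneg.2 (min_le_right _ _)
        · exact inf'_le x (mem_univ l)
    _ = (1 - ∑ l, b l) * osc x := by
        rw [← sum_mul, ← sum_mul, hsum, hsum, osc]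
        ring
    _ ≤ (1 - δ) * osc x := by
        gcongr
        exact osc_nonneg x

theorem tendsto_osc_pow_mulVec {S : Matrix ι ι ℝ} (hS : S ∈ rowStochastic ℝ ι) {m : ℕ}
    (hm : 0 < m) (hSm : ∀ i j, 0 < (S ^ m) i j) (x : ι → ℝ) :
    Tendsto (fun k => osc (S ^ k *ᵥ x)) atTop (𝓝 0) := by
  obtain ⟨p, hp⟩ := Finite.exists_min fun p : ι × ι => (S ^ m) p.1 p.2
  have hδ1 : (S ^ m) p.1 p.2 ≤ 1 := le_one_of_mem_rowStochastic (pow_mem hS m)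
  refine tendsto_zero_of_antitone_of_le_mul_shift (antitone_nat_of_succ_le fun k => ?_)
    (fun k => osc_nonneg _) hm (sub_nonneg.2 hδ1) (sub_lt_self 1 (hSm p.1 p.2)) fun k => ?_
  · rw [pow_succ', ← mulVec_mulVec]
    simpa using osc_mulVec_le hS (fun i j => hS.1 i j) (S ^ k *ᵥ x)
  · rw [pow_add, ← mulVec_mulVec]
    exact osc_mulVec_le (pow_mem hS m) (fun i j => hp (i, j)) (S ^ k *ᵥ x)

theorem tendsto_pow_mulVec_of_mem_rowStochastic {S : Matrix ι ι ℝ}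
    (hS : S ∈ rowStochastic ℝ ι) {m : ℕ} (hm : 0 < m) (hSm : ∀ i j, 0 < (S ^ m) i j)
    {π : ι → ℝ} (hπ : ∀ i, 0 ≤ π i) (hπ1 : ∑ i, π i = 1) (hπS : π ᵥ* S = π) (x : ι → ℝ) :
    Tendsto (fun k => S ^ k *ᵥ x) atTop (𝓝 fun _ => π ⬝ᵥ x) := by
  refine tendsto_pi_nhds.2 fun i => ?_
  have hdist : ∀ k, dist ((S ^ k *ᵥ x) i) (π ⬝ᵥ x) ≤ osc (S ^ k *ᵥ x) := fun k => by
    rw [Real.dist_eq, ← vecMul_pow_eq_self hπS k, ← dotProduct_mulVec]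
    exact abs_sub_dotProduct_le_osc hπ hπ1 _ i
  exact tendsto_iff_dist_tendsto_zero.2 <|
    squeeze_zero (fun k => dist_nonneg) hdist (tendsto_osc_pow_mulVec hS hm hSm x)

theorem tendsto_pow_of_mem_rowStochastic {S : Matrix ι ι ℝ}
    (hS : S ∈ rowStochastic ℝ ι) {m : ℕ} (hm : 0 < m) (hSm : ∀ i j, 0 < (S ^ m) i j)
    {π : ι → ℝ} (hπ : ∀ i, 0 ≤ π i) (hπ1 : ∑ i, π i = 1) (hπS : π ᵥ* S = π) :
    Tendsto (fun k => S ^ k) atTop (𝓝 (vecMulVec 1 π)) := by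
  refine tendsto_pi_nhds.2 fun i => tendsto_pi_nhds.2 fun j => ?_
  have hcol := tendsto_pi_nhds.1
    (tendsto_pow_mulVec_of_mem_rowStochastic hS hm hSm hπ hπ1 hπS (Pi.single j 1)) i
  simpa [mulVec_single_one, vecMulVec_apply] using hcol

theorem tendsto_pow_of_mulVec_eq_self_of_vecMul_eq_self {Q : Matrix ι ι ℝ}
    (hQ : ∀ i j, 0 ≤ Q i j) {m : ℕ} (hm : 0 < m) (hQm : ∀ i j, 0 < (Q ^ m) i j)
    {u v : ι → ℝ} (hu : ∀ i, 0 < u i) (hv : ∀ i, 0 ≤ v i) (hQu : Q *ᵥ u = u)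
    (hvQ : v ᵥ* Q = v) (hvu : v ⬝ᵥ u = 1) :
    Tendsto (fun k => Q ^ k) atTop (𝓝 (vecMulVec u v)) := by
  have hu0 : ∀ i, u i ≠ 0 := fun i => (hu i).ne'
  have hDD : diagonal u * diagonal u⁻¹ = 1 := by simp [diagonal_mul_diagonal, hu0]
  set S := diagonal u⁻¹ * Q * diagonal u
  have hQS : ∀ k, Q ^ k = diagonal u * S ^ k * diagonal u⁻¹ := fun k => by
    rw [diagonal_inv_mul_mul_diagonal_pow hu0, ← mul_assoc, ← mul_assoc, hDD, one_mul,
      mul_assoc, hDD, mul_one]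
  have hSm : ∀ i j, 0 < (S ^ m) i j := fun i j => by
    simp only [S, diagonal_inv_mul_mul_diagonal_pow hu0, diagonal_mul, mul_diagonal,
      Pi.inv_apply]
    exact mul_pos (mul_pos (inv_pos.2 (hu i)) (hQm i j)) (hu j)
  have hlim := tendsto_pow_of_mem_rowStochastic
    (diagonal_inv_mul_mul_diagonal_mem_rowStochastic hQ hu hQu) hm hSm
    (fun i => mul_nonneg (hv i) (hu i).le) hvu (vecMul_diagonal_inv_mul_mul_diagonal hu0 hvQ)
  have hconj : diagonal u * vecMulVec 1 (v * u) * diagonal u⁻¹ = vecMulVec u v := by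
    ext i j
    simp only [diagonal_mul, mul_diagonal, vecMulVec_apply, Pi.one_apply, Pi.mul_apply,
      Pi.inv_apply]
    field_simp [hu0 j]
  rw [funext hQS, ← hconj]
  exact (hlim.const_mul (diagonal u)).mul_const (diagonal u⁻¹)

theorem pos_of_mulVec_eq_smul {P : Matrix ι ι ℝ} (hP : ∀ i j, 0 ≤ P i j) {m : ℕ}
    (hm : 0 < m) (hPm : ∀ i j, 0 < (P ^ m) i j) {u : ι → ℝ} (hu : ∀ i, 0 < u i) {r : ℝ}
    (hPu : P *ᵥ u = r • u) : 0 < r := by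
  obtain ⟨i⟩ := ‹Nonempty ι›
  have hr0 : 0 ≤ r := by
    have hi : 0 ≤ (P *ᵥ u) i := sum_nonneg fun j _ => mul_nonneg (hP i j) (hu j).le
    rw [hPu, Pi.smul_apply, smul_eq_mul] at hi
    exact nonneg_of_mul_nonneg_left hi (hu i)
  refine hr0.lt_of_ne fun hr => ?_
  have hPmu : 0 < (P ^ m *ᵥ u) i :=
    sum_pos (fun j _ => mul_pos (hPm i j) (hu j)) univ_nonempty
  obtain ⟨k, rfl⟩ := Nat.exists_eq_add_of_lt hm
  rw [pow_succ, ← mulVec_mulVec, hPu, ← hr, zero_smul, mulVec_zero] at hPmu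
  exact hPmu.ne rfl

end Nonempty

end Matrix

theorem primitive_power_limit_general {n : ℕ} (P : Matrix (Fin n) (Fin n) ℝ)
    (hP : ∀ i j, 0 ≤ P i j) (hprim : MatPrimitive P)
    (r : ℝ)
    (u v : Fin n → ℝ) (hu : ∀ i, 0 < u i) (hv : ∀ i, 0 < v i)
    (hue : P.mulVec u = r • u) (hve : P.vecMul v = r • v)
    (hnorm : v ⬝ᵥ u = 1) :
    Filter.Tendsto (fun k : ℕ => (r⁻¹ • P) ^ k) Filter.atTop
      (nhds (Matrix.vecMulVec u v)) := by
  cases isEmpty_or_nonempty (Fin n) with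
  | inl _ => exact tendsto_const_nhds.congr fun _ => Subsingleton.elim _ _
  | inr _ =>
    obtain ⟨m, hm, hPm⟩ := hprim
    have hr : 0 < r := pos_of_mulVec_eq_smul hP hm hPm hu hue
    refine tendsto_pow_of_mulVec_eq_self_of_vecMul_eq_self (fun i j => ?_) hm (fun i j => ?_)
      hu (fun i => (hv i).le) ?_ ?_ hnorm
    · exact mul_nonneg (inv_nonneg.2 hr.le) (hP i j)
    · rw [smul_pow]
      exact mul_pos (pow_pos (inv_pos.2 hr) m) (hPm i j)
    · rw [smul_mulVec, hue, smul_smul, inv_mul_cancel₀ hr.ne', one_smul]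
    · rw [vecMul_smul, hve, smul_smul, inv_mul_cancel₀ hr.ne', one_smul]

theorem primitive_power_limit {n : ℕ} (P : Matrix (Fin n) (Fin n) ℝ)
    (hP : ∀ i j, 0 ≤ P i j) (hprim : MatPrimitive P)
    (r : ℝ) (hr : r = specRad P)
    (u v : Fin n → ℝ) (hu : ∀ i, 0 < u i) (hv : ∀ i, 0 < v i)
    (hue : P.mulVec u = r • u) (hve : P.vecMul v = r • v)
    (hnorm : v ⬝ᵥ u = 1) :
    Filter.Tendsto (fun k : ℕ => (r⁻¹ • P) ^ k) Filter.atTop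
      (nhds (Matrix.vecMulVec u v)) :=
  primitive_power_limit_general P hP hprim r u v hu hv hue hve hnorm
end
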